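/- Let X and B be nonempty finite types. Let ω be a quantum state on X × B with partial trace over X equal to (1 / (Fintype.card B : ℂ)) • (1 : Matrix B B ℂ), let Ω be a quantum channel from B to X whose Choi matrix equals ω, and let σ be a quantum state on B. Assume ω admits no symmetric two-sided extension: there is NO quantum state τ on X × B × X whose partial trace over the third factor equals ω and whose partial trace over the first factor, after the swap reindexing B × X ≃ X × B, equals ω. Define channels W₁ on X × B by W₁ ρ := (Ω (tr over the first factor of ρ)) ⊗ σ, and W₂ on B × X by W₂ ρ := σ ⊗ (Ω (tr over the second factor of ρ)). Then W₁ and W₂ are locally compatible (for every quantum state ρ₁ on X × B, the partial trace over the first factor of W₁ ρ₁ equals σ, and for every quantum state ρ₂ on B × X, the partial trace over the second factor of W₂ ρ₂ equals σ), yet there exists NO quantum channel 𝓕 from X × B × X to itself (factors labelled A, B, C with A = C = X) such that for every quantum state ρ on X × B × X, tr_C (𝓕 ρ) = W₁ (tr_C ρ) and tr_A (𝓕 ρ) = W₂ (tr_A ρ). -/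

import Mathlib

open Matrix Kronecker
open scoped ComplexOrder

noncomputable section

/-- A quantum state: positive semidefinite with unit trace. -/
def IsState {n : Type*} [Fintype n] (ρ : Matrix n n ℂ) : Prop :=
  ρ.PosSemidef ∧ ρ.trace = 1

/-- The Choi matrix of a linear map on matrices. -/
def choi {n m : Type*} [Fintype n] [DecidableEq n]
    (𝓔 : Matrix n n ℂ →ₗ[ℂ] Matrix m m ℂ) : Matrix (m × n) (m × n) ℂ :=
  Matrix.of fun p q =>
    (1 / (Fintype.card n : ℂ)) * 𝓔 (Matrix.single p.2 q.2 1) p.1 q.1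

/-- A quantum channel: trace preserving and completely positive. -/
def IsChannel {n m : Type*} [Fintype n] [DecidableEq n] [Fintype m]
    (𝓔 : Matrix n n ℂ →ₗ[ℂ] Matrix m m ℂ) : Prop :=
  (∀ ρ : Matrix n n ℂ, (𝓔 ρ).trace = ρ.trace) ∧ (choi 𝓔).PosSemidef

/-- Partial trace over the second (right) factor. -/
def trR {a b : Type*} [Fintype b] (M : Matrix (a × b) (a × b) ℂ) : Matrix a a ℂ :=
  Matrix.of fun i j => ∑ k, M (i, k) (j, k)

/-- Partial trace over the first (left) factor. -/
def trL {a b : Type*} [Fintype a] (M : Matrix (a × b) (a × b) ℂ) : Matrix b b ℂ :=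
  Matrix.of fun i j => ∑ k, M (k, i) (k, j)

/-- Partial trace over the third factor of a triple product. -/
def trC3 {a b c : Type*} [Fintype c] (M : Matrix (a × b × c) (a × b × c) ℂ) :
    Matrix (a × b) (a × b) ℂ :=
  Matrix.of fun i j => ∑ k, M (i.1, i.2, k) (j.1, j.2, k)

/-!
Suppose a channel `𝓕` on `X × B × X` were compatible with `W₁` and `W₂`. Feed it
`𝟙/|X| ⊗ Φ ⊗ 𝟙/|X|`, where the middle input is maximally entangled with a reference copy of `B`,
and trace out the output `B`. Complete positivity of `𝓕` makes the result `τ` a state on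
`X × B × X` (it is a sum of compressions of the Choi matrix of `𝓕`), and the two compatibility
conditions, read on the blocks of `τ`, say that both its `XB` and its `BX` marginals are the Choi
state of `Ω`, i.e. `ω`. So `τ` is a symmetric extension of `ω`, which does not exist.
The compatibility conditions are assumed only on states; they hold for all inputs by linearity,
since states span all matrices.
-/

section PartialTrace

variable {a b c : Type*}

lemma trace_trL [Fintype a] [Fintype b] (M : Matrix (a × b) (a × b) ℂ) :
    (trL M).trace = M.trace := by
  simp only [trace, trL, diag_apply, of_apply, Fintype.sum_prod_type]
  exact Finset.sum_comm

lemma trace_trR [Fintype a] [Fintype b] (M : Matrix (a × b) (a × b) ℂ) :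
    (trR M).trace = M.trace := by
  simp [trace, trR, Fintype.sum_prod_type]

lemma trace_trC3 [Fintype a] [Fintype b] [Fintype c] (M : Matrix (a × b × c) (a × b × c) ℂ) :
    (trC3 M).trace = M.trace := by
  simp [trace, trC3, Fintype.sum_prod_type]

lemma trL_kronecker [Fintype a] (A : Matrix a a ℂ) (B : Matrix b b ℂ) :
    trL (A ⊗ₖ B) = A.trace • B := by
  ext i j
  simp [trL, trace, Finset.sum_mul]

lemma trR_kronecker [Fintype b] (A : Matrix a a ℂ) (B : Matrix b b ℂ) :
    trR (A ⊗ₖ B) = B.trace • A := by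
  ext i j
  simp [trR, trace, Finset.mul_sum, mul_comm]

variable [Fintype a] [DecidableEq a] [Fintype c] [DecidableEq c]

lemma trL_trC3_one_kronecker (M : Matrix b b ℂ) :
    trL (trC3 ((1 : Matrix a a ℂ) ⊗ₖ (M ⊗ₖ (1 : Matrix c c ℂ)))) =
      ((Fintype.card a * Fintype.card c : ℕ) : ℂ) • M := by
  ext i j
  simp [trL, trC3, one_apply]
  ring

lemma trR_trL_one_kronecker (M : Matrix b b ℂ) :
    trR (trL ((1 : Matrix a a ℂ) ⊗ₖ (M ⊗ₖ (1 : Matrix c c ℂ)))) =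
      ((Fintype.card a * Fintype.card c : ℕ) : ℂ) • M := by
  ext i j
  simp [trL, trR, one_apply]
  ring

variable (a b) in
def trLₗ : Matrix (a × b) (a × b) ℂ →ₗ[ℂ] Matrix b b ℂ where
  toFun := trL
  map_add' M N := by ext; simp [trL, Finset.sum_add_distrib]
  map_smul' r M := by ext; simp [trL, Finset.mul_sum]

variable (a b c) in
def trC3ₗ : Matrix (a × b × c) (a × b × c) ℂ →ₗ[ℂ] Matrix (a × b) (a × b) ℂ where
  toFun := trC3
  map_add' M N := by ext; simp [trC3, Finset.sum_add_distrib]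
  map_smul' r M := by ext; simp [trC3, Finset.mul_sum]

end PartialTrace

section States

variable {n m : Type*} [Fintype n] [DecidableEq n]

lemma span_isState_eq_top : Submodule.span ℂ {ρ : Matrix n n ℂ | IsState ρ} = ⊤ := by
  have hpsd : Submodule.span ℂ {A : Matrix n n ℂ | A.PosSemidef} = ⊤ := by
    open scoped MatrixOrder Matrix.Norms.L2Operator in
    simpa [Matrix.nonneg_iff_posSemidef] using CStarAlgebra.span_nonneg (A := Matrix n n ℂ)
  rw [eq_top_iff, ← hpsd, Submodule.span_le]
  intro P (hP : P.PosSemidef)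
  by_cases htr : P.trace = 0
  · simp [(hP.trace_eq_zero_iff).1 htr]
  · have hstate : IsState (P.trace⁻¹ • P) :=
      ⟨hP.smul (inv_nonneg.2 hP.trace_nonneg),
        by rw [trace_smul, smul_eq_mul, inv_mul_cancel₀ htr]⟩
    simpa [smul_smul, mul_inv_cancel₀ htr] using
      Submodule.smul_mem _ P.trace (Submodule.subset_span (s := {ρ | IsState ρ}) hstate)

lemma LinearMap.ext_of_isState {f g : Matrix n n ℂ →ₗ[ℂ] Matrix m m ℂ}
    (h : ∀ ρ, IsState ρ → f ρ = g ρ) : f = g :=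
  LinearMap.ext_on span_isState_eq_top h

end States

lemma sum_mul_choi_apply {n m : Type*} [Fintype n] [DecidableEq n]
    (𝓔 : Matrix n n ℂ →ₗ[ℂ] Matrix m m ℂ) (M : Matrix n n ℂ) (i j : m) :
    ∑ k, ∑ l, M k l * choi 𝓔 (i, k) (j, l) = 1 / (Fintype.card n : ℂ) * 𝓔 M i j := by
  conv_rhs => rw [matrix_eq_sum_single M]
  simp only [map_sum, Matrix.sum_apply, Finset.mul_sum, choi, of_apply]
  refine Fintype.sum_congr _ _ fun k => Fintype.sum_congr _ _ fun l => ?_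
  rw [show single k l (M k l) = M k l • single k l 1 by simp [smul_single], map_smul]
  simp only [Matrix.smul_apply, smul_eq_mul]
  ring

section MiddleChoi

variable {a b c a' b' c' : Type*} [Fintype a] [DecidableEq a] [Fintype b] [DecidableEq b]
  [Fintype c] [DecidableEq c]

/-- `tr_{b'} [(𝓕 ⊗ id_b) (𝟙/|a| ⊗ Φ ⊗ 𝟙/|c|)]` for the maximally entangled `Φ` on `b × b`,
with the reference copy of `b` placed between the outputs `a'` and `c'`. -/
def middleChoi
    (𝓕 : Matrix (a × b × c) (a × b × c) ℂ →ₗ[ℂ] Matrix (a' × b' × c') (a' × b' × c') ℂ)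
    [Fintype b'] : Matrix (a' × b × c') (a' × b × c') ℂ :=
  Matrix.of fun i j => 1 / (Fintype.card (a × b × c) : ℂ) *
    ∑ β, 𝓕 ((1 : Matrix a a ℂ) ⊗ₖ (single i.2.1 j.2.1 1 ⊗ₖ (1 : Matrix c c ℂ)))
      (i.1, β, i.2.2) (j.1, β, j.2.2)

variable [Fintype b']
  (𝓕 : Matrix (a × b × c) (a × b × c) ℂ →ₗ[ℂ] Matrix (a' × b' × c') (a' × b' × c') ℂ)

lemma middleChoi_eq_sum_submatrix :
    middleChoi 𝓕 = ∑ β, ∑ α, ∑ γ, (choi 𝓕).submatrix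
      (fun i : a' × b × c' => ((i.1, β, i.2.2), (α, i.2.1, γ)))
      (fun i : a' × b × c' => ((i.1, β, i.2.2), (α, i.2.1, γ))) := by
  ext i j
  simp only [middleChoi, of_apply, Matrix.sum_apply, submatrix_apply, Finset.mul_sum]
  refine Fintype.sum_congr _ _ fun β => ?_
  rw [← sum_mul_choi_apply]
  simp [Fintype.sum_prod_type, one_apply, single_apply, ite_and]

lemma posSemidef_middleChoi (h𝓕 : (choi 𝓕).PosSemidef) : (middleChoi 𝓕).PosSemidef := by
  rw [middleChoi_eq_sum_submatrix]
  exact posSemidef_sum _ fun β _ => posSemidef_sum _ fun α _ => posSemidef_sum _ fun γ _ =>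
    h𝓕.submatrix _

variable [Nonempty a] [Nonempty c] {σ : Matrix b' b' ℂ}

lemma trC3_middleChoi [Fintype c'] {Ω : Matrix b b ℂ →ₗ[ℂ] Matrix a' a' ℂ} (hσ : σ.trace = 1)
    (h : ∀ M, trC3 (𝓕 M) = Ω (trL (trC3 M)) ⊗ₖ σ) : trC3 (middleChoi 𝓕) = choi Ω := by
  ext ⟨x, β⟩ ⟨x', β'⟩
  have hslice : trC3 (middleChoi 𝓕) (x, β) (x', β') = 1 / (Fintype.card (a × b × c) : ℂ) *
      trR (trC3 (𝓕 ((1 : Matrix a a ℂ) ⊗ₖ (single β β' 1 ⊗ₖ (1 : Matrix c c ℂ))))) x x' := by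
    simp only [trC3, trR, middleChoi, of_apply, Finset.mul_sum]
    exact Finset.sum_comm
  rw [hslice, h, trR_kronecker, hσ, one_smul, trL_trC3_one_kronecker, map_smul]
  simp only [choi, of_apply, Matrix.smul_apply, smul_eq_mul, Fintype.card_prod]
  have : (Fintype.card a * Fintype.card c : ℂ) ≠ 0 := by simp
  push_cast
  field_simp

lemma trL_middleChoi_swap [Fintype a'] {Ω : Matrix b b ℂ →ₗ[ℂ] Matrix c' c' ℂ} (hσ : σ.trace = 1)
    (h : ∀ M, trL (𝓕 M) = σ ⊗ₖ Ω (trR (trL M))) :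
    (trL (middleChoi 𝓕)).submatrix Prod.swap Prod.swap = choi Ω := by
  ext ⟨y, β⟩ ⟨y', β'⟩
  have hslice : trL (middleChoi 𝓕) (β, y) (β', y') = 1 / (Fintype.card (a × b × c) : ℂ) *
      trL (trL (𝓕 ((1 : Matrix a a ℂ) ⊗ₖ (single β β' 1 ⊗ₖ (1 : Matrix c c ℂ))))) y y' := by
    simp only [trL, middleChoi, of_apply, Finset.mul_sum]
    exact Finset.sum_comm
  rw [submatrix_apply, Prod.swap_prod_mk, Prod.swap_prod_mk, hslice, h, trL_kronecker, hσ,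
    one_smul, trR_trL_one_kronecker, map_smul]
  simp only [choi, of_apply, Matrix.smul_apply, smul_eq_mul, Fintype.card_prod]
  have : (Fintype.card a * Fintype.card c : ℂ) ≠ 0 := by simp
  push_cast
  field_simp

end MiddleChoi

theorem unextendible_choi_gives_incompatible_channels_general
    {X B : Type*} [Fintype X] [DecidableEq X] [Nonempty X]
    [Fintype B] [DecidableEq B]
    (ω : Matrix (X × B) (X × B) ℂ) (hω : IsState ω)
    (Ω : Matrix B B ℂ →ₗ[ℂ] Matrix X X ℂ) (hΩ : IsChannel Ω) (hΩchoi : choi Ω = ω)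
    (σ : Matrix B B ℂ) (hσ : IsState σ)
    (hext : ¬ ∃ τ : Matrix (X × B × X) (X × B × X) ℂ, IsState τ ∧
      trC3 τ = ω ∧ (trL τ).submatrix Prod.swap Prod.swap = ω)
    (W₁ : Matrix (X × B) (X × B) ℂ →ₗ[ℂ] Matrix (X × B) (X × B) ℂ)
    (hW₁ : ∀ ρ : Matrix (X × B) (X × B) ℂ, W₁ ρ = Ω (trL ρ) ⊗ₖ σ)
    (W₂ : Matrix (B × X) (B × X) ℂ →ₗ[ℂ] Matrix (B × X) (B × X) ℂ)
    (hW₂ : ∀ ρ : Matrix (B × X) (B × X) ℂ, W₂ ρ = σ ⊗ₖ Ω (trR ρ)) :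
    ((∀ ρ₁ : Matrix (X × B) (X × B) ℂ, IsState ρ₁ → trL (W₁ ρ₁) = σ) ∧
     (∀ ρ₂ : Matrix (B × X) (B × X) ℂ, IsState ρ₂ → trR (W₂ ρ₂) = σ)) ∧
    ¬ ∃ 𝓕 : Matrix (X × B × X) (X × B × X) ℂ →ₗ[ℂ] Matrix (X × B × X) (X × B × X) ℂ,
        IsChannel 𝓕 ∧ ∀ ρ : Matrix (X × B × X) (X × B × X) ℂ, IsState ρ →
          trC3 (𝓕 ρ) = W₁ (trC3 ρ) ∧ trL (𝓕 ρ) = W₂ (trL ρ) := by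
  refine ⟨⟨fun ρ₁ hρ₁ => ?_, fun ρ₂ hρ₂ => ?_⟩, ?_⟩
  · rw [hW₁, trL_kronecker, hΩ.1, trace_trL, hρ₁.2, one_smul]
  · rw [hW₂, trR_kronecker, hΩ.1, trace_trR, hρ₂.2, one_smul]
  rintro ⟨𝓕, h𝓕, hcompat⟩
  have h₁ : ∀ M, trC3 (𝓕 M) = Ω (trL (trC3 M)) ⊗ₖ σ := fun M => by
    rw [← hW₁]
    exact LinearMap.congr_fun (LinearMap.ext_of_isState (f := trC3ₗ X B X ∘ₗ 𝓕)
      (g := W₁ ∘ₗ trC3ₗ X B X) fun ρ hρ => (hcompat ρ hρ).1) M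
  have h₂ : ∀ M, trL (𝓕 M) = σ ⊗ₖ Ω (trR (trL M)) := fun M => by
    rw [← hW₂]
    exact LinearMap.congr_fun (LinearMap.ext_of_isState (f := trLₗ X (B × X) ∘ₗ 𝓕)
      (g := W₂ ∘ₗ trLₗ X (B × X)) fun ρ hρ => (hcompat ρ hρ).2) M
  have hC : trC3 (middleChoi 𝓕) = ω := hΩchoi ▸ trC3_middleChoi 𝓕 hσ.2 h₁
  have hA : (trL (middleChoi 𝓕)).submatrix Prod.swap Prod.swap = ω :=
    hΩchoi ▸ trL_middleChoi_swap 𝓕 hσ.2 h₂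
  have hstate : IsState (middleChoi 𝓕) :=
    ⟨posSemidef_middleChoi 𝓕 h𝓕.2, by rw [← trace_trC3, hC, hω.2]⟩
  exact hext ⟨middleChoi 𝓕, hstate, hC, hA⟩

/-- If the Choi state `ω` of `Ω` has no symmetric two-sided extension, then the channels
`W₁ ρ = Ω(tr_X ρ) ⊗ σ` and `W₂ ρ = σ ⊗ Ω(tr_X ρ)` are locally compatible but not
compatible (Proposition 2 of the appendix). -/
theorem unextendible_choi_gives_incompatible_channels
    {X B : Type*} [Fintype X] [DecidableEq X] [Nonempty X]
    [Fintype B] [DecidableEq B] [Nonempty B]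
    (ω : Matrix (X × B) (X × B) ℂ) (hω : IsState ω)
    (hωmarg : trL ω = (1 / (Fintype.card B : ℂ)) • (1 : Matrix B B ℂ))
    (Ω : Matrix B B ℂ →ₗ[ℂ] Matrix X X ℂ) (hΩ : IsChannel Ω) (hΩchoi : choi Ω = ω)
    (σ : Matrix B B ℂ) (hσ : IsState σ)
    (hext : ¬ ∃ τ : Matrix (X × B × X) (X × B × X) ℂ, IsState τ ∧
      trC3 τ = ω ∧ (trL τ).submatrix Prod.swap Prod.swap = ω)
    (W₁ : Matrix (X × B) (X × B) ℂ →ₗ[ℂ] Matrix (X × B) (X × B) ℂ)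
    (hW₁ : ∀ ρ : Matrix (X × B) (X × B) ℂ, W₁ ρ = Ω (trL ρ) ⊗ₖ σ)
    (W₂ : Matrix (B × X) (B × X) ℂ →ₗ[ℂ] Matrix (B × X) (B × X) ℂ)
    (hW₂ : ∀ ρ : Matrix (B × X) (B × X) ℂ, W₂ ρ = σ ⊗ₖ Ω (trR ρ)) :
    ((∀ ρ₁ : Matrix (X × B) (X × B) ℂ, IsState ρ₁ → trL (W₁ ρ₁) = σ) ∧
     (∀ ρ₂ : Matrix (B × X) (B × X) ℂ, IsState ρ₂ → trR (W₂ ρ₂) = σ)) ∧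
    ¬ ∃ 𝓕 : Matrix (X × B × X) (X × B × X) ℂ →ₗ[ℂ] Matrix (X × B × X) (X × B × X) ℂ,
        IsChannel 𝓕 ∧ ∀ ρ : Matrix (X × B × X) (X × B × X) ℂ, IsState ρ →
          trC3 (𝓕 ρ) = W₁ (trC3 ρ) ∧ trL (𝓕 ρ) = W₂ (trL ρ) :=
  unextendible_choi_gives_incompatible_channels_general ω hω Ω hΩ hΩchoi σ hσ hext W₁ hW₁ W₂ hW₂
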